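/- arXiv:2007.11479 — 4 statements merged into one kernel-verified Lean document; each statement's English description precedes it below -/
import Mathlib

section
/- Let H be a Hilbert space with inner product a, Π : H → S a bounded projection onto a closed subspace, V = ker Π, C the a-orthogonal projection onto V, and W = (I − C)(H). If u ∈ H satisfies a(u,v) = F(v) for all v ∈ H (F a continuous linear functional), and u_W ∈ W satisfies a(u_W, v) = F(v) for all v ∈ W, then u_W = (I − C) Π u and u − u_W = C u. -/
/-!
Let `W = range (I - C)`. The defining property of `C` makes `V ⊥ W`, and Galerkin orthogonality
puts `u - u_W` in `Wᗮ`. Since `Π` is idempotent, `u - Πu ∈ V`, so `(I - C) Π u ∈ W` also has its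
error `u - (I - C) Π u = (u - Π u) + C Π u` in `V ⊆ Wᗮ`; an element of `W` with error in `Wᗮ` is
unique. Finally `C` fixes `V`, so that error equals `C (u - Π u) + C Π u = C u`.
-/

open scoped RealInnerProductSpace

theorem sub_apply_mem_of_idempotent {R M F : Type*} [Ring R] [AddCommGroup M] [Module R M]
    [FunLike F M M] [AddMonoidHomClass F M M] {V : Submodule R M} {P : F}
    (hproj : ∀ v, P (P v) = P v) (hker : ∀ v, v ∈ V ↔ P v = 0) (u : M) : u - P u ∈ V := by
  rw [hker, map_sub, hproj, sub_self]

section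

variable {H : Type*} [NormedAddCommGroup H] [InnerProductSpace ℝ H]

theorem Submodule.eq_of_mem_of_sub_mem_orthogonal {K : Submodule ℝ H} {u x y : H}
    (hx : x ∈ K) (hy : y ∈ K) (hux : u - x ∈ Kᗮ) (huy : u - y ∈ Kᗮ) : x = y := by
  have hxy : x - y ∈ K ⊓ Kᗮ := Submodule.mem_inf.mpr
    ⟨K.sub_mem hx hy, sub_sub_sub_cancel_left y x u ▸ Kᗮ.sub_mem huy hux⟩
  rw [K.inf_orthogonal_eq_bot, Submodule.mem_bot] at hxy
  exact sub_eq_zero.mp hxy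

section OrthogonalCorrector

variable {V : Submodule ℝ H} {C : H →L[ℝ] H}

theorem apply_eq_self_of_orthogonal_corrector (hCmem : ∀ v, C v ∈ V)
    (hCorth : ∀ v, ∀ w ∈ V, ⟪v - C v, w⟫ = 0) {v : H} (hv : v ∈ V) : C v = v := by
  have hself : ⟪v - C v, v - C v⟫ = 0 := hCorth v _ (V.sub_mem hv (hCmem v))
  exact (sub_eq_zero.mp (inner_self_eq_zero.mp hself)).symm

theorem mem_orthogonal_range_id_sub_iff {x : H} :
    x ∈ (LinearMap.range (LinearMap.id - (C : H →ₗ[ℝ] H)))ᗮ ↔ ∀ v, ⟪x, v - C v⟫ = 0 := by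
  simp only [Submodule.mem_orthogonal', LinearMap.mem_range, forall_exists_index,
    forall_apply_eq_imp_iff, LinearMap.sub_apply, LinearMap.id_apply, ContinuousLinearMap.coe_coe]

theorem le_orthogonal_range_of_orthogonal_corrector (hCorth : ∀ v, ∀ w ∈ V, ⟪v - C v, w⟫ = 0) :
    V ≤ (LinearMap.range (LinearMap.id - (C : H →ₗ[ℝ] H)))ᗮ := fun w hw =>
  mem_orthogonal_range_id_sub_iff.mpr fun v => (real_inner_comm _ _).trans (hCorth v w hw)

end OrthogonalCorrector

end

theorem stmt4_general
    {H : Type*} [NormedAddCommGroup H] [InnerProductSpace ℝ H]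
    (V : Submodule ℝ H) (Pi0 : H →L[ℝ] H)
    (hproj : ∀ v, Pi0 (Pi0 v) = Pi0 v)
    (hker : ∀ v : H, v ∈ V ↔ Pi0 v = 0)
    (C : H →L[ℝ] H)
    (hCmem : ∀ v, C v ∈ V)
    (hCorth : ∀ v, ∀ w ∈ V, ⟪v - C v, w⟫ = 0)
    (F : H →L[ℝ] ℝ) (u uW : H)
    (hu : ∀ v : H, ⟪u, v⟫ = F v)
    (huW : ∃ v : H, uW = v - C v)
    (hgal : ∀ v : H, ⟪uW, v - C v⟫ = F (v - C v)) :
    uW = Pi0 u - C (Pi0 u) ∧ u - uW = C u := by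
  have hV_orth := le_orthogonal_range_of_orthogonal_corrector hCorth
  have hPi := sub_apply_mem_of_idempotent hproj hker u
  have hgal_orth : u - uW ∈ (LinearMap.range (LinearMap.id - (C : H →ₗ[ℝ] H)))ᗮ := by
    refine mem_orthogonal_range_id_sub_iff.mpr fun v => ?_
    rw [inner_sub_left, hu, hgal, sub_self]
  have herror : u - (Pi0 u - C (Pi0 u)) = (u - Pi0 u) + C (Pi0 u) := by abel
  have huW_eq : uW = Pi0 u - C (Pi0 u) := by
    obtain ⟨w, rfl⟩ := huW
    refine Submodule.eq_of_mem_of_sub_mem_orthogonal ?_ ?_ hgal_orth (hV_orth ?_)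
    · exact ⟨w, rfl⟩
    · exact ⟨Pi0 u, rfl⟩
    · exact herror ▸ V.add_mem hPi (hCmem _)
  refine ⟨huW_eq, ?_⟩
  calc u - uW = (u - Pi0 u) + C (Pi0 u) := by rw [huW_eq, herror]
    _ = C (u - Pi0 u) + C (Pi0 u) := by
      rw [apply_eq_self_of_orthogonal_corrector hCmem hCorth hPi]
    _ = C u := by rw [← map_add, sub_add_cancel]

/-- Exact representation of the LOD Galerkin solution: `u_W = (I − C) Π u` and
`u − u_W = C u`. -/
theorem stmt4
    {H : Type*} [NormedAddCommGroup H] [InnerProductSpace ℝ H] [CompleteSpace H]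
    (V : Submodule ℝ H) (Pi0 : H →L[ℝ] H)
    (hproj : ∀ v, Pi0 (Pi0 v) = Pi0 v)
    (hker : ∀ v : H, v ∈ V ↔ Pi0 v = 0)
    (C : H →L[ℝ] H)
    (hCmem : ∀ v, C v ∈ V)
    (hCorth : ∀ v, ∀ w ∈ V, ⟪v - C v, w⟫ = 0)
    (F : H →L[ℝ] ℝ) (u uW : H)
    (hu : ∀ v : H, ⟪u, v⟫ = F v)
    (huW : ∃ v : H, uW = v - C v)
    (hgal : ∀ v : H, ⟪uW, v - C v⟫ = F (v - C v)) :
    uW = Pi0 u - C (Pi0 u) ∧ u - uW = C u :=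
  stmt4_general V Pi0 hproj hker C hCmem hCorth F u uW hu huW hgal
end

section
/- Let H be a Hilbert space with inner product a and norm ‖·‖_a, C : H → H the a-orthogonal projection onto a closed subspace V, and C_ν : H → H linear maps with range in V satisfying ‖C v − C_ν v‖_a ≤ q^ν ‖C v‖_a for all v ∈ H, with 0 ≤ q < 1. Let Π : H → S be a bounded projection with ker Π = V, u the solution of a(u,·) = F, u_W the Galerkin solution in W = (I−C)(H), and u^{(ν)} the Galerkin solution in W_ν = (I − C_ν)(S) with respect to the bilinear form a. Then ‖u − u^{(ν)}‖_a ≤ (1 + q^ν)‖u − u_W‖_a + q^ν ‖u − Π u‖_a. -/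
open scoped RealInnerProductSpace

/-- Discretization error estimate for the localized LOD method (with `ã = a`):
`‖u − u^{(ν)}‖ ≤ (1 + q^ν)‖u − u_W‖ + q^ν ‖u − Π u‖`. -/
theorem stmt5
    {H : Type*} [NormedAddCommGroup H] [InnerProductSpace ℝ H] [CompleteSpace H]
    (V : Submodule ℝ H) (Pi0 : H →L[ℝ] H)
    (hproj : ∀ v, Pi0 (Pi0 v) = Pi0 v)
    (hker : ∀ v : H, v ∈ V ↔ Pi0 v = 0)
    (C : H →L[ℝ] H)
    (hCmem : ∀ v, C v ∈ V)
    (hCorth : ∀ v, ∀ w ∈ V, ⟪v - C v, w⟫ = 0)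
    (Cν : H →L[ℝ] H) (q : ℝ) (ν : ℕ) (hq0 : 0 ≤ q) (hq1 : q < 1)
    (hCν : ∀ v, Cν v ∈ V)
    (happ : ∀ v : H, ‖C v - Cν v‖ ≤ q ^ ν * ‖C v‖)
    (F : H →L[ℝ] ℝ) (u uW uν : H)
    (hu : ∀ v : H, ⟪u, v⟫ = F v)
    (huW : ∃ v : H, uW = v - C v)
    (hgalW : ∀ v : H, ⟪uW, v - C v⟫ = F (v - C v))
    (huν : ∃ v : H, Pi0 v = v ∧ uν = v - Cν v)
    (hgalν : ∀ v : H, Pi0 v = v → ⟪uν, v - Cν v⟫ = F (v - Cν v)) :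
    ‖u - uν‖ ≤ (1 + q ^ ν) * ‖u - uW‖ + q ^ ν * ‖u - Pi0 u‖ := by
  -- C fixes V
  have hCfix : ∀ v ∈ V, C v = v := by
    intro v hv
    have h1 : ⟪v - C v, v - C v⟫ = 0 :=
      hCorth v (v - C v) (V.sub_mem hv (hCmem v))
    have h2 : v - C v = 0 := inner_self_eq_zero.mp h1
    have := sub_eq_zero.mp h2
    exact this.symm
  -- Galerkin orthogonality in W
  have horthW : ∀ v : H, ⟪u - uW, v - C v⟫ = 0 := by
    intro v
    rw [inner_sub_left, hu, hgalW]; ring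
  -- uW = u - C u, i.e. u - uW = C u
  obtain ⟨v0, hv0⟩ := huW
  have hCu : u - uW = C u := by
    set e := (u - v0) - C (u - v0) with he_def
    have he1 : ⟪u - uW, e⟫ = 0 := horthW (u - v0)
    have he2 : ⟪C u, e⟫ = 0 := by
      rw [real_inner_comm]
      exact hCorth (u - v0) (C u) (hCmem u)
    have heq : u - uW = C u + e := by
      rw [hv0, he_def, map_sub]; abel
    have hee : ⟪e, e⟫ = 0 := by
      have : ⟪u - uW - C u, e⟫ = 0 := by
        rw [inner_sub_left, he1, he2]; ring
      have h3 : u - uW - C u = e := by rw [heq]; abel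
      rwa [h3] at this
    have : e = 0 := inner_self_eq_zero.mp hee
    rw [heq, this, add_zero]
  -- Galerkin orthogonality in Wν
  have horthν : ∀ v : H, Pi0 v = v → ⟪u - uν, v - Cν v⟫ = 0 := by
    intro v hv
    rw [inner_sub_left, hu, hgalν v hv]; ring
  -- setup p = Pi0 u
  set p := Pi0 u with hp_def
  have hp : Pi0 p = p := hproj u
  have hup : u - p ∈ V := by
    rw [hker, map_sub, hp_def, hproj, sub_self]
  have hCup : C (u - p) = u - p := hCfix _ hup
  set w := p - Cν p with hw_def
  obtain ⟨v1, hv1p, hv1⟩ := huν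
  -- orthogonality of the error against uν - w
  have horth : ⟪u - uν, uν - w⟫ = 0 := by
    have h := horthν (v1 - p) (by rw [map_sub, hv1p, hp])
    have heq : uν - w = (v1 - p) - Cν (v1 - p) := by
      rw [hv1, hw_def, map_sub]; abel
    rwa [heq]
  -- best approximation
  have key : ‖u - uν‖ ≤ ‖u - w‖ := by
    have h1 : ⟪u - uν, u - w⟫ = ‖u - uν‖ ^ 2 := by
      have : u - w = (u - uν) + (uν - w) := by abel
      rw [this, inner_add_right, horth, add_zero, real_inner_self_eq_norm_sq]
    have h2 : ⟪u - uν, u - w⟫ ≤ ‖u - uν‖ * ‖u - w‖ := real_inner_le_norm _ _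
    rcases eq_or_lt_of_le (norm_nonneg (u - uν)) with h0 | h0
    · rw [← h0]; exact norm_nonneg _
    · nlinarith [h1, h2]
  -- decompose u - w
  have hdec : u - w = C u - (C p - Cν p) := by
    have : u - p = C u - C p := by rw [← map_sub]; exact hCup.symm
    rw [hw_def]
    have : u - (p - Cν p) = (u - p) + Cν p := by abel
    rw [this, ‹u - p = C u - C p›]; abel
  have h4 : ‖u - w‖ ≤ ‖C u‖ + ‖C p - Cν p‖ := by
    rw [hdec]; exact norm_sub_le _ _
  have h5 : ‖C p - Cν p‖ ≤ q ^ ν * ‖C p‖ := happ p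
  have h6 : ‖C p‖ ≤ ‖C u‖ + ‖u - p‖ := by
    have : C p = C u - (u - p) := by
      rw [← hCup, ← map_sub]; congr 1; abel
    rw [this]; exact norm_sub_le _ _
  have hqν : (0:ℝ) ≤ q ^ ν := pow_nonneg hq0 ν
  have hCueq : ‖C u‖ = ‖u - uW‖ := by rw [hCu]
  have := mul_le_mul_of_nonneg_left h6 hqν
  nlinarith [key, h4, h5, this, hCueq]
end

section
/- Let H be a Hilbert space with inner product a, and let V = V₁ + ⋯ + V_m be a decomposition of a closed subspace V into closed subspaces such that: (stability) every v ∈ V admits a decomposition v = Σ v_i with v_i ∈ V_i and Σ a(v_i,v_i) ≤ K₁ a(v,v); (boundedness) for all decompositions, a(Σ v_i, Σ v_i) ≤ K₂ Σ a(v_i, v_i). Let P_i : H → V_i be the a-orthogonal projections and T = Σ P_i. Then (1/K₁) a(v,v) ≤ a(Tv, v) ≤ K₂ a(v,v) for all v ∈ V. -/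
/-!
Write `S = Σ ‖P_i v‖²`. Since each `P_i` is an orthogonal projection onto `V_i`,
`⟪T v, v⟫ = S`. For the lower bound, pair `v` with a stable decomposition `v = Σ d_i`:
`‖v‖² = Σ ⟪P_i v, d_i⟫ ≤ √S · √(Σ ‖d_i‖²) ≤ √S · √K₁ ‖v‖` by Cauchy–Schwarz in `H` and in `ℝⁿ`.
For the upper bound, boundedness applied to the decomposition `T v = Σ P_i v` gives
`‖T v‖² ≤ K₂ S`, hence `S² = ⟪T v, v⟫² ≤ ‖T v‖² ‖v‖² ≤ K₂ S ‖v‖²`.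
Both bounds are then cancellations in an inequality of the form `x² ≤ c x`.
-/

open scoped RealInnerProductSpace

theorem le_of_sq_le_mul_self {x c : ℝ} (hc : 0 ≤ c) (h : x ^ 2 ≤ c * x) : x ≤ c := by
  rcases le_or_gt x 0 with hx | hx
  · linarith
  · nlinarith

section OrthogonalSplitting

variable {H : Type*} [NormedAddCommGroup H] [InnerProductSpace ℝ H]

theorem sq_inner_le_mul_inner_mul_norm_sq {x v : H} {K : ℝ} (h : ‖x‖ ^ 2 ≤ K * ⟪x, v⟫) :
    ⟪x, v⟫ ^ 2 ≤ K * ⟪x, v⟫ * ‖v‖ ^ 2 :=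
  calc ⟪x, v⟫ ^ 2 = |⟪x, v⟫| ^ 2 := (sq_abs _).symm
    _ ≤ (‖x‖ * ‖v‖) ^ 2 := pow_le_pow_left₀ (abs_nonneg _) (abs_real_inner_le_norm x v) 2
    _ = ‖x‖ ^ 2 * ‖v‖ ^ 2 := mul_pow _ _ _
    _ ≤ K * ⟪x, v⟫ * ‖v‖ ^ 2 := mul_le_mul_of_nonneg_right h (sq_nonneg _)

variable {ι : Type*} {U : ι → Submodule ℝ H} {P : ι → H →L[ℝ] H}

theorem inner_eq_inner_apply_of_orthogonal
    (hPorth : ∀ i (v : H), ∀ w ∈ U i, ⟪v - P i v, w⟫ = 0) (i : ι) (v : H) {w : H}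
    (hw : w ∈ U i) : ⟪v, w⟫ = ⟪P i v, w⟫ := by
  have h := hPorth i v w hw
  rwa [inner_sub_left, sub_eq_zero] at h

variable [Fintype ι]

theorem inner_sum_apply_self_eq_sum_norm_sq (hPmem : ∀ i v, P i v ∈ U i)
    (hPorth : ∀ i (v : H), ∀ w ∈ U i, ⟪v - P i v, w⟫ = 0) (v : H) :
    ⟪(∑ i, P i) v, v⟫ = ∑ i, ‖P i v‖ ^ 2 := by
  rw [sum_apply, sum_inner]
  refine Finset.sum_congr rfl fun i _ => ?_
  rw [real_inner_comm, inner_eq_inner_apply_of_orthogonal hPorth i v (hPmem i v),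
    real_inner_self_eq_norm_sq]

theorem sq_norm_sq_le_of_sum_eq (hPorth : ∀ i (v : H), ∀ w ∈ U i, ⟪v - P i v, w⟫ = 0)
    {v : H} {d : ι → H} (hd : ∀ i, d i ∈ U i) (hsum : ∑ i, d i = v) :
    (‖v‖ ^ 2) ^ 2 ≤ (∑ i, ‖P i v‖ ^ 2) * ∑ i, ‖d i‖ ^ 2 := by
  have hpair : ‖v‖ ^ 2 ≤ ∑ i, ‖P i v‖ * ‖d i‖ :=
    calc ‖v‖ ^ 2 = ⟪v, ∑ i, d i⟫ := by rw [hsum, real_inner_self_eq_norm_sq]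
      _ = ∑ i, ⟪P i v, d i⟫ := by
        rw [inner_sum]
        exact Finset.sum_congr rfl fun i _ => inner_eq_inner_apply_of_orthogonal hPorth i v (hd i)
      _ ≤ ∑ i, ‖P i v‖ * ‖d i‖ := Finset.sum_le_sum fun i _ => real_inner_le_norm _ _
  calc (‖v‖ ^ 2) ^ 2 ≤ (∑ i, ‖P i v‖ * ‖d i‖) ^ 2 := pow_le_pow_left₀ (sq_nonneg _) hpair 2
    _ ≤ (∑ i, ‖P i v‖ ^ 2) * ∑ i, ‖d i‖ ^ 2 := Finset.sum_mul_sq_le_sq_mul_sq _ _ _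

end OrthogonalSplitting

theorem stmt6_general
    {H : Type*} [NormedAddCommGroup H] [InnerProductSpace ℝ H]
    {m : ℕ} (V : Submodule ℝ H) (Vi : Fin (m + 1) → Submodule ℝ H)
    (K₁ K₂ : ℝ) (hK₁ : 0 < K₁) (hK₂ : 0 < K₂)
    (hstab : ∀ v ∈ V, ∃ d : Fin (m + 1) → H,
      (∀ i, d i ∈ Vi i) ∧ (∑ i, d i) = v ∧ (∑ i, ‖d i‖ ^ 2) ≤ K₁ * ‖v‖ ^ 2)
    (hbdd : ∀ d : Fin (m + 1) → H, (∀ i, d i ∈ Vi i) →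
      ‖∑ i, d i‖ ^ 2 ≤ K₂ * ∑ i, ‖d i‖ ^ 2)
    (P : Fin (m + 1) → H →L[ℝ] H)
    (hPmem : ∀ i v, P i v ∈ Vi i)
    (hPorth : ∀ i (v : H), ∀ w ∈ Vi i, ⟪v - P i v, w⟫ = 0) :
    ∀ v ∈ V, (1 / K₁) * ‖v‖ ^ 2 ≤ ⟪(∑ i, P i) v, v⟫ ∧
      ⟪(∑ i, P i) v, v⟫ ≤ K₂ * ‖v‖ ^ 2 := by
  intro v hv
  have hT := inner_sum_apply_self_eq_sum_norm_sq hPmem hPorth v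
  have hS : 0 ≤ ∑ i, ‖P i v‖ ^ 2 := Finset.sum_nonneg fun i _ => sq_nonneg _
  constructor
  · obtain ⟨d, hd, hsum, hstb⟩ := hstab v hv
    have hsq : (‖v‖ ^ 2) ^ 2 ≤ ((∑ i, ‖P i v‖ ^ 2) * K₁) * ‖v‖ ^ 2 := by
      rw [mul_assoc]
      exact (sq_norm_sq_le_of_sum_eq hPorth hd hsum).trans (mul_le_mul_of_nonneg_left hstb hS)
    rw [hT, one_div, inv_mul_le_iff₀ hK₁, mul_comm K₁]
    exact le_of_sq_le_mul_self (mul_nonneg hS hK₁.le) hsq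
  · have hTv : ‖(∑ i, P i) v‖ ^ 2 ≤ K₂ * ⟪(∑ i, P i) v, v⟫ := by
      rw [hT, sum_apply]
      exact hbdd _ fun i => hPmem i v
    refine le_of_sq_le_mul_self (mul_nonneg hK₂.le (sq_nonneg _)) ?_
    exact (sq_inner_le_mul_inner_mul_norm_sq hTv).trans_eq (by ring)

/-- Abstract additive Schwarz spectral bound: a stable and bounded splitting
`V = V₀ + ⋯ + V_m` yields `(1/K₁) a(v,v) ≤ a(Tv,v) ≤ K₂ a(v,v)` on `V` for the
additive preconditioner `T = Σ P_i` built from the orthogonal projections. -/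
theorem stmt6
    {H : Type*} [NormedAddCommGroup H] [InnerProductSpace ℝ H] [CompleteSpace H]
    {m : ℕ} (V : Submodule ℝ H) (Vi : Fin (m + 1) → Submodule ℝ H)
    (hVi : ∀ i, Vi i ≤ V)
    (K₁ K₂ : ℝ) (hK₁ : 0 < K₁) (hK₂ : 0 < K₂)
    (hstab : ∀ v ∈ V, ∃ d : Fin (m + 1) → H,
      (∀ i, d i ∈ Vi i) ∧ (∑ i, d i) = v ∧ (∑ i, ‖d i‖ ^ 2) ≤ K₁ * ‖v‖ ^ 2)
    (hbdd : ∀ d : Fin (m + 1) → H, (∀ i, d i ∈ Vi i) →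
      ‖∑ i, d i‖ ^ 2 ≤ K₂ * ∑ i, ‖d i‖ ^ 2)
    (P : Fin (m + 1) → H →L[ℝ] H)
    (hPmem : ∀ i v, P i v ∈ Vi i)
    (hPorth : ∀ i (v : H), ∀ w ∈ Vi i, ⟪v - P i v, w⟫ = 0) :
    ∀ v ∈ V, (1 / K₁) * ‖v‖ ^ 2 ≤ ⟪(∑ i, P i) v, v⟫ ∧
      ⟪(∑ i, P i) v, v⟫ ≤ K₂ * ‖v‖ ^ 2 :=
  stmt6_general V Vi K₁ K₂ hK₁ hK₂ hstab hbdd P hPmem hPorth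
end

section
/- Let a_G, G ∈ 𝒢 (a finite index set), be positive semidefinite symmetric bilinear forms on a real vector space H with Σ_{G} a_G(v,w) = a(v,w). Suppose subspaces V₀,…,V_m ⊆ H and a symmetric 'interaction' relation such that for each G the number of indices i with a_G nonzero on V_i is at most c_G + 1. If for each G, Σ_{i,j=0}^m a_G(v_i, w_j) ≤ (c_G+1)(Σ_i a_G(v_i,v_i))^{1/2}(Σ_j a_G(w_j,w_j))^{1/2} for all v_i ∈ V_i, w_j ∈ V_j, and c_G ≤ c_N for all G, then Σ_{i,j=0}^m a(v_i, w_j) ≤ (c_N+1)(Σ_i a(v_i,v_i))^{1/2}(Σ_j a(w_j,w_j))^{1/2}. -/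
/-!
Sum the local estimates over `G`, bound each local constant by `c_N + 1`, and
apply Cauchy–Schwarz in `ℝ^G` to the vectors `(√(Σᵢ a_G(vᵢ, vᵢ)))_G` and
`(√(Σⱼ a_G(wⱼ, wⱼ)))_G`; the decomposition `a = Σ_G a_G` identifies the three
resulting sums over `G` with the global ones.
-/

open Finset

theorem Finset.sum_le_mul_sqrt_sum_mul_sqrt_sum {ι : Type*} (s : Finset ι) {u x y : ι → ℝ}
    {C : ℝ} (hC : 0 ≤ C) (hx : ∀ i, 0 ≤ x i) (hy : ∀ i, 0 ≤ y i)
    (hu : ∀ i ∈ s, u i ≤ C * √(x i) * √(y i)) :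
    ∑ i ∈ s, u i ≤ C * √(∑ i ∈ s, x i) * √(∑ i ∈ s, y i) :=
  calc ∑ i ∈ s, u i
      ≤ ∑ i ∈ s, C * (√(x i) * √(y i)) :=
        sum_le_sum fun i hi => (hu i hi).trans_eq (mul_assoc ..)
    _ = C * ∑ i ∈ s, √(x i) * √(y i) := (mul_sum ..).symm
    _ ≤ C * (√(∑ i ∈ s, x i) * √(∑ i ∈ s, y i)) :=
        mul_le_mul_of_nonneg_left (Real.sum_sqrt_mul_sqrt_le s hx hy) hC
    _ = C * √(∑ i ∈ s, x i) * √(∑ i ∈ s, y i) := (mul_assoc ..).symm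

theorem stmt10_general
    {H : Type*} [AddCommGroup H] [Module ℝ H]
    {G : Type*} [Fintype G]
    (aG : G → H → H → ℝ) (a : H → H → ℝ)
    (hsum : ∀ v w : H, a v w = ∑ g, aG g v w)
    (hpsd : ∀ g (v : H), 0 ≤ aG g v v)
    {m : ℕ} (Vi : Fin (m + 1) → Submodule ℝ H)
    (c : G → ℕ) (cN : ℕ) (hc : ∀ g, c g ≤ cN)
    (hloc : ∀ g, ∀ vv ww : Fin (m + 1) → H,
      (∀ i, vv i ∈ Vi i) → (∀ j, ww j ∈ Vi j) →
      (∑ i, ∑ j, aG g (vv i) (ww j)) ≤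
        ((c g : ℝ) + 1) * Real.sqrt (∑ i, aG g (vv i) (vv i)) *
          Real.sqrt (∑ j, aG g (ww j) (ww j)))
    (vv ww : Fin (m + 1) → H)
    (hv : ∀ i, vv i ∈ Vi i) (hw : ∀ j, ww j ∈ Vi j) :
    (∑ i, ∑ j, a (vv i) (ww j)) ≤
      ((cN : ℝ) + 1) * Real.sqrt (∑ i, a (vv i) (vv i)) *
        Real.sqrt (∑ j, a (ww j) (ww j)) := by
  have hdiag (uu : Fin (m + 1) → H) :
      ∑ i, a (uu i) (uu i) = ∑ g, ∑ i, aG g (uu i) (uu i) := by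
    simp only [hsum]
    exact sum_comm
  have hmixed : ∑ i, ∑ j, a (vv i) (ww j) = ∑ g, ∑ i, ∑ j, aG g (vv i) (ww j) := by
    simp only [hsum, sum_comm (γ := G)]
  rw [hmixed, hdiag vv, hdiag ww]
  refine sum_le_mul_sqrt_sum_mul_sqrt_sum _ (by positivity)
    (fun g => sum_nonneg fun i _ => hpsd g (vv i)) (fun g => sum_nonneg fun j _ => hpsd g (ww j))
    fun g _ => (hloc g vv ww hv hw).trans ?_
  gcongr
  exact_mod_cast hc g

/-- Summation step for the strengthened Cauchy–Schwarz inequality: local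
Cauchy–Schwarz estimates for the local forms `a_G` with constants `c_G + 1 ≤
c_N + 1` sum up (via `a = Σ_G a_G` and Cauchy–Schwarz in `ℝ^{m+1}`) to a global
strengthened Cauchy–Schwarz inequality with constant `c_N + 1`. -/
theorem stmt10
    {H : Type*} [AddCommGroup H] [Module ℝ H]
    {G : Type*} [Fintype G]
    (aG : G → H → H → ℝ) (a : H → H → ℝ)
    (hsum : ∀ v w : H, a v w = ∑ g, aG g v w)
    (hsymm : ∀ g (v w : H), aG g v w = aG g w v)
    (hpsd : ∀ g (v : H), 0 ≤ aG g v v)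
    {m : ℕ} (Vi : Fin (m + 1) → Submodule ℝ H)
    (c : G → ℕ) (cN : ℕ) (hc : ∀ g, c g ≤ cN)
    (hloc : ∀ g, ∀ vv ww : Fin (m + 1) → H,
      (∀ i, vv i ∈ Vi i) → (∀ j, ww j ∈ Vi j) →
      (∑ i, ∑ j, aG g (vv i) (ww j)) ≤
        ((c g : ℝ) + 1) * Real.sqrt (∑ i, aG g (vv i) (vv i)) *
          Real.sqrt (∑ j, aG g (ww j) (ww j)))
    (vv ww : Fin (m + 1) → H)
    (hv : ∀ i, vv i ∈ Vi i) (hw : ∀ j, ww j ∈ Vi j) :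
    (∑ i, ∑ j, a (vv i) (ww j)) ≤
      ((cN : ℝ) + 1) * Real.sqrt (∑ i, a (vv i) (vv i)) *
        Real.sqrt (∑ j, a (ww j) (ww j)) :=
  stmt10_general aG a hsum hpsd Vi c cN hc hloc vv ww hv hw
end
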